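/- For all compactly supported smooth functions u, v : ℝ → ℝ, one has ∫_ℝ [(−3)·(4u_xxx − v_xxx − 12u u_x + v u_x + 2u v_x) + (1/2)·(9u_xxx − 2v_xxx − 12v u_x − 6u v_x + 4v v_x)] dx = 0. That is, the Poisson bracket {ℋ₀, ℋ₁} associated with 𝔓₀ vanishes (the integrand equals (δH₀/δu, δH₀/δv)·𝔓₀(δH₁/δu, δH₁/δv)): ℋ₀ and ℋ₁ are in involution with respect to 𝔓₀. -/

import Mathlib

open MeasureTheory
open scoped ContDiff

lemma integral_deriv_zero_of_compact_support (F : ℝ → ℝ)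
    (hF : ContDiff ℝ 1 F) (hFc : HasCompactSupport F) :
    ∫ x : ℝ, deriv F x = 0 := by
  have hint : MeasureTheory.Integrable (deriv F) :=
    (hF.continuous_deriv le_rfl).integrable_of_hasCompactSupport hFc.deriv
  have h1 := hFc.integral_Iic_deriv_eq hF (0 : ℝ)
  have h2 := hFc.integral_Ioi_deriv_eq hF (0 : ℝ)
  have h3 := intervalIntegral.integral_Iic_add_Ioi (b := (0:ℝ))
    hint.integrableOn hint.integrableOn
  rw [← h3, h1, h2]
  ring

lemma tsupport_deriv_subset' (f : ℝ → ℝ) : tsupport (deriv f) ⊆ tsupport f :=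
  closure_minimal support_deriv_subset isClosed_closure

/-- For compactly supported smooth `u, v`, the Poisson bracket
`{ℋ₀, ℋ₁}` associated with 𝔓₀ vanishes: the integrand is
`(δH₀/δu, δH₀/δv)·𝔓₀(δH₁/δu, δH₁/δv)`, where `𝔓₀(4u−v, −u+(2/9)v)` equals the
right-hand side of the KKS system; hence `ℋ₀` and `ℋ₁` are in involution. -/
theorem H0_H1_in_involution (u v : ℝ → ℝ)
    (hu : ContDiff ℝ (⊤ : ℕ∞) u) (hv : ContDiff ℝ (⊤ : ℕ∞) v)
    (huc : HasCompactSupport u) (hvc : HasCompactSupport v) :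
    ∫ x : ℝ,
      ((-3 : ℝ) * (4 * iteratedDeriv 3 u x - iteratedDeriv 3 v x
          - 12 * u x * deriv u x + v x * deriv u x + 2 * u x * deriv v x)
        + (1 / 2 : ℝ) * (9 * iteratedDeriv 3 u x - 2 * iteratedDeriv 3 v x
          - 12 * v x * deriv u x - 6 * u x * deriv v x + 4 * v x * deriv v x)) = 0 := by
  set F : ℝ → ℝ := fun x => (-15/2 : ℝ) * deriv (deriv u) x + 2 * deriv (deriv v) x
    + 18 * u x * u x - 9 * u x * v x + v x * v x with hFdef
  have hu' : ContDiff ℝ ∞ u := hu.of_le (by simp)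
  have hv' : ContDiff ℝ ∞ v := hv.of_le (by simp)
  have hu1 : ContDiff ℝ ∞ (deriv u) := (contDiff_infty_iff_deriv.mp hu').2
  have hu2 : ContDiff ℝ ∞ (deriv (deriv u)) := (contDiff_infty_iff_deriv.mp hu1).2
  have hv1 : ContDiff ℝ ∞ (deriv v) := (contDiff_infty_iff_deriv.mp hv').2
  have hv2 : ContDiff ℝ ∞ (deriv (deriv v)) := (contDiff_infty_iff_deriv.mp hv1).2
  have hF : ContDiff ℝ ∞ F := by
    apply ContDiff.add
    apply ContDiff.sub
    apply ContDiff.add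
    apply ContDiff.add
    · exact contDiff_const.mul hu2
    · exact contDiff_const.mul hv2
    · exact (contDiff_const.mul hu').mul hu'
    · exact (contDiff_const.mul hu').mul hv'
    · exact hv'.mul hv'
  have hFc : HasCompactSupport F := by
    apply HasCompactSupport.intro (huc.union hvc)
    intro x hx
    simp only [Set.mem_union, not_or] at hx
    obtain ⟨hxu, hxv⟩ := hx
    have h1 : u x = 0 := image_eq_zero_of_notMem_tsupport hxu
    have h2 : v x = 0 := image_eq_zero_of_notMem_tsupport hxv
    have h3 : deriv (deriv u) x = 0 := image_eq_zero_of_notMem_tsupport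
      (fun h => hxu (tsupport_deriv_subset' u (tsupport_deriv_subset' (deriv u) h)))
    have h4 : deriv (deriv v) x = 0 := image_eq_zero_of_notMem_tsupport
      (fun h => hxv (tsupport_deriv_subset' v (tsupport_deriv_subset' (deriv v) h)))
    simp [hFdef, h1, h2, h3, h4]
  have key : ∀ x : ℝ,
      ((-3 : ℝ) * (4 * iteratedDeriv 3 u x - iteratedDeriv 3 v x
          - 12 * u x * deriv u x + v x * deriv u x + 2 * u x * deriv v x)
        + (1 / 2 : ℝ) * (9 * iteratedDeriv 3 u x - 2 * iteratedDeriv 3 v x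
          - 12 * v x * deriv u x - 6 * u x * deriv v x + 4 * v x * deriv v x))
      = deriv F x := by
    intro x
    have d0u : HasDerivAt u (deriv u x) x := ((hu'.differentiable (by simp)) x).hasDerivAt
    have d0v : HasDerivAt v (deriv v x) x := ((hv'.differentiable (by simp)) x).hasDerivAt
    have d2u : HasDerivAt (deriv (deriv u)) (deriv (deriv (deriv u)) x) x :=
      ((hu2.differentiable (by simp)) x).hasDerivAt
    have d2v : HasDerivAt (deriv (deriv v)) (deriv (deriv (deriv v)) x) x :=
      ((hv2.differentiable (by simp)) x).hasDerivAt
    have hF' : HasDerivAt F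
        ((-15/2 : ℝ) * deriv (deriv (deriv u)) x + 2 * deriv (deriv (deriv v)) x
          + ((18 * deriv u x) * u x + (18 * u x) * deriv u x)
          - ((9 * deriv u x) * v x + (9 * u x) * deriv v x)
          + (deriv v x * v x + v x * deriv v x)) x := by
      exact ((((d2u.const_mul (-15/2 : ℝ)).add (d2v.const_mul (2 : ℝ))).add
        ((d0u.const_mul (18 : ℝ)).mul d0u)).sub
        ((d0u.const_mul (9 : ℝ)).mul d0v)).add (d0v.mul d0v)
    rw [hF'.deriv]
    have e1 : iteratedDeriv 3 u x = deriv (deriv (deriv u)) x := by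
      simp [iteratedDeriv_succ, iteratedDeriv_zero]
    have e2 : iteratedDeriv 3 v x = deriv (deriv (deriv v)) x := by
      simp [iteratedDeriv_succ, iteratedDeriv_zero]
    rw [e1, e2]; ring
  calc ∫ x : ℝ,
      ((-3 : ℝ) * (4 * iteratedDeriv 3 u x - iteratedDeriv 3 v x
          - 12 * u x * deriv u x + v x * deriv u x + 2 * u x * deriv v x)
        + (1 / 2 : ℝ) * (9 * iteratedDeriv 3 u x - 2 * iteratedDeriv 3 v x
          - 12 * v x * deriv u x - 6 * u x * deriv v x + 4 * v x * deriv v x))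
      = ∫ x : ℝ, deriv F x := by
        apply MeasureTheory.integral_congr_ae
        filter_upwards with x using key x
    _ = 0 := integral_deriv_zero_of_compact_support F (hF.of_le (by simp)) hFc
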